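/- arXiv:2507.20711 — 3 statements merged into one kernel-verified Lean document; each statement's English description precedes it below -/
import Mathlib

section
/- Let p ∈ [0,1] and let (y_t)_{t≥1} be a sequence with y_t ∈ {0,1} such that for every t ≥ 2: y_t = 1 if (1/(t−1))·∑_{i=1}^{t−1} y_i ≤ p, and y_t = 0 otherwise (y_1 ∈ {0,1} arbitrary). Then for every t ≥ 1, the outcome fairness value satisfies (1/t)·∑_{i=1}^{t} y_i ∈ [max(0, p − 1/t), min(1, p + 1/t)]. -/
/-!
With `S t = ∑_{i ≤ t} y i`, the enforcer adds `1` exactly when `S t ≤ p t`, so the deviation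
`S t - p t` moves by `1 - p` (when it is `≤ 0`) or by `-p` (when it is `> 0`). For `p ∈ [0, 1]`
this keeps `|S t - p t| ≤ 1` forever, i.e. the outcome fairness `S t / t` stays within `1 / t`
of `p`; and it lies in `[0, 1]` because every outcome does.
-/

open Finset

lemma abs_add_ite_sub_mul_succ_le_one {p s t : ℝ} (hp : p ∈ Set.Icc (0 : ℝ) 1)
    (h : |s - p * t| ≤ 1) :
    |s + (if s ≤ p * t then 1 else 0) - p * (t + 1)| ≤ 1 := by
  obtain ⟨hp0, hp1⟩ := hp
  rw [abs_le] at h ⊢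
  split_ifs with hs <;> constructor <;> linarith

lemma one_div_mul_mem_Icc_of_abs_sub_mul_le_one {p s t : ℝ} (ht : 0 < t)
    (hs : s ∈ Set.Icc 0 t) (h : |s - p * t| ≤ 1) :
    (1 / t) * s ∈ Set.Icc (max 0 (p - 1 / t)) (min 1 (p + 1 / t)) := by
  have hdev : |(1 / t) * s - p| ≤ 1 / t := by
    rw [show (1 / t) * s - p = (s - p * t) / t by field_simp, abs_div, abs_of_pos ht]
    gcongr
  have hle_one : (1 / t) * s ≤ 1 := by
    rw [one_div_mul_eq_div, div_le_one ht]
    exact hs.2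
  rw [abs_le] at hdev
  exact ⟨max_le (by positivity [hs.1]) (by linarith), le_min hle_one (by linarith)⟩

lemma sum_Icc_mem_Icc_of_mem_Icc {y : ℕ → ℝ} {t : ℕ}
    (hy : ∀ i ∈ Icc 1 t, y i ∈ Set.Icc (0 : ℝ) 1) :
    ∑ i ∈ Icc 1 t, y i ∈ Set.Icc 0 (t : ℝ) := by
  refine ⟨sum_nonneg fun i hi => (hy i hi).1, ?_⟩
  simpa using sum_le_card_nsmul _ _ 1 fun i hi => (hy i hi).2

section Enforcer

variable {p : ℝ} {y : ℕ → ℝ}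

lemma enforcer_succ
    (hrec : ∀ t : ℕ, 2 ≤ t →
      y t = if (1 / ((t : ℝ) - 1)) * ∑ i ∈ Icc 1 (t - 1), y i ≤ p then 1 else 0)
    {t : ℕ} (ht : 1 ≤ t) :
    y (t + 1) = if ∑ i ∈ Icc 1 t, y i ≤ p * t then 1 else 0 := by
  have ht0 : (0 : ℝ) < t := by exact_mod_cast ht
  rw [hrec (t + 1) (by omega)]
  simp only [Nat.add_sub_cancel, Nat.cast_add, Nat.cast_one, add_sub_cancel_right,
    one_div_mul_eq_div, div_le_iff₀ ht0]

lemma enforcer_mem_Icc (hy1 : y 1 ∈ ({0, 1} : Set ℝ))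
    (hrec : ∀ t : ℕ, 2 ≤ t →
      y t = if (1 / ((t : ℝ) - 1)) * ∑ i ∈ Icc 1 (t - 1), y i ≤ p then 1 else 0)
    {t : ℕ} (ht : 1 ≤ t) :
    y t ∈ Set.Icc (0 : ℝ) 1 := by
  rcases ht.eq_or_lt with rfl | ht
  · obtain h | h : y 1 = 0 ∨ y 1 = 1 := hy1 <;> simp [h]
  · rw [hrec t ht]
    split_ifs <;> simp

lemma enforcer_abs_sum_sub_mul_le_one (hp : p ∈ Set.Icc (0 : ℝ) 1)
    (hy1 : y 1 ∈ ({0, 1} : Set ℝ))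
    (hrec : ∀ t : ℕ, 2 ≤ t →
      y t = if (1 / ((t : ℝ) - 1)) * ∑ i ∈ Icc 1 (t - 1), y i ≤ p then 1 else 0)
    {t : ℕ} (ht : 1 ≤ t) :
    |∑ i ∈ Icc 1 t, y i - p * t| ≤ 1 := by
  induction t, ht using Nat.le_induction with
  | base =>
    obtain ⟨hp0, hp1⟩ := hp
    obtain h | h : y 1 = 0 ∨ y 1 = 1 := hy1 <;>
      simp only [Icc_self, sum_singleton, h, Nat.cast_one, mul_one, abs_le] <;>
      constructor <;> linarith
  | succ t ht ih =>
    rw [sum_Icc_succ_top (by omega), enforcer_succ hrec ht]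
    push_cast
    exact abs_add_ite_sub_mul_succ_le_one hp ih

end Enforcer

/-- the process-agnostic outcome-fairness enforcer keeps the outcome
fairness value within `[max 0 (p - 1/t), min 1 (p + 1/t)]` at all times `t ≥ 1`. -/
theorem outcome_fairness_enforcement (p : ℝ) (hp : p ∈ Set.Icc (0:ℝ) 1)
    (y : ℕ → ℝ) (hy1 : y 1 ∈ ({0, 1} : Set ℝ))
    (hrec : ∀ t : ℕ, 2 ≤ t →
      y t = if (1 / ((t:ℝ) - 1)) * ∑ i ∈ Finset.Icc 1 (t - 1), y i ≤ p then 1 else 0) :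
    ∀ t : ℕ, 1 ≤ t →
      (1 / (t:ℝ)) * ∑ i ∈ Finset.Icc 1 t, y i ∈
        Set.Icc (max 0 (p - 1 / (t:ℝ))) (min 1 (p + 1 / (t:ℝ))) := by
  intro t ht
  have hsum : ∑ i ∈ Icc 1 t, y i ∈ Set.Icc 0 (t : ℝ) :=
    sum_Icc_mem_Icc_of_mem_Icc fun i hi => enforcer_mem_Icc hy1 hrec (mem_Icc.mp hi).1
  exact one_div_mul_mem_Icc_of_abs_sub_mul_le_one (by positivity) hsum
    (enforcer_abs_sum_sub_mul_le_one hp hy1 hrec ht)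
end

section
/- Let T ≥ 1 be an integer, p ∈ [0,1], δ ∈ [0,1], and S ⊆ {0, 1, …, T}. Define P : {0,…,T} × ℕ → ℝ by backward recursion: P(T, h) = 1 if h ∈ S and P(T, h) = 0 otherwise; and for t < T, P(t, h) = p·P(t+1, h+1) + (1−p)·P(t+1, h). Define P_δ : {0,…,T} × ℕ → ℝ by: P_δ(T, h) = P(T, h); and for t < T, if P(t, h) ≥ 1 − δ then P_δ(t, h) = p·P_δ(t+1, h+1) + (1−p)·P_δ(t+1, h), and otherwise P_δ(t, h) = P_δ(t+1, h+ε) where ε = 1 if P(t+1, h+1) ≥ P(t+1, h) and ε = 0 otherwise. Then for all t ∈ {0,…,T} and all h ∈ {0,…,t}: P_δ(t, h) ≥ P(t, h). -/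
/-- the δ-enforcer never decreases the probability of reaching the
target set. `P t h` is the success probability of the unenforced Bernoulli(p)
process after `t` tosses with `h` heads; `Pδ t h` is that of the δ-enforced
process.  Both are characterized by the stated backward recursions. -/
theorem delta_enforcer_improves (T : ℕ) (hT : 1 ≤ T) (p δ : ℝ)
    (hp : p ∈ Set.Icc (0:ℝ) 1) (hδ : δ ∈ Set.Icc (0:ℝ) 1)
    (S : Finset ℕ) (hS : ∀ s ∈ S, s ≤ T)
    (P Pδ : ℕ → ℕ → ℝ)
    (hPT : ∀ h, P T h = if h ∈ S then 1 else 0)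
    (hPrec : ∀ t, t < T → ∀ h, P t h = p * P (t+1) (h+1) + (1 - p) * P (t+1) h)
    (hPδT : ∀ h, Pδ T h = P T h)
    (hPδrec : ∀ t, t < T → ∀ h,
      Pδ t h = if 1 - δ ≤ P t h
        then p * Pδ (t+1) (h+1) + (1 - p) * Pδ (t+1) h
        else Pδ (t+1) (if P (t+1) h ≤ P (t+1) (h+1) then h + 1 else h)) :
    ∀ t ≤ T, ∀ h ≤ t, P t h ≤ Pδ t h := by
  obtain ⟨hp0, hp1⟩ := hp
  suffices H : ∀ k t, T = t + k → ∀ h, P t h ≤ Pδ t h by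
    intro t ht h _
    exact H (T - t) t (by omega) h
  intro k
  induction k with
  | zero =>
    intro t htT h
    have : t = T := by omega
    subst this
    rw [hPδT]
  | succ k ih =>
    intro t htT h
    have htlt : t < T := by omega
    have ih' := ih (t + 1) (by omega)
    rw [hPδrec t htlt h]
    have hrec := hPrec t htlt h
    split_ifs with h1 h2
    · rw [hrec]
      have := ih' (h + 1)
      have := ih' h
      nlinarith
    · rw [hrec]
      have := ih' (h + 1)
      nlinarith
    · rw [hrec]
      have := ih' h
      push_neg at h2
      nlinarith
end

section
/- Let T ≥ 1 be an integer, p ∈ [0,1], δ ∈ [0,1], and S ⊆ {0, 1, …, T}. Define P and P_δ by the backward recursions: P(T, h) = 1 if h ∈ S else 0; P(t, h) = p·P(t+1, h+1) + (1−p)·P(t+1, h) for t < T; P_δ(T, h) = P(T, h); and for t < T, P_δ(t, h) = p·P_δ(t+1, h+1) + (1−p)·P_δ(t+1, h) if P(t, h) ≥ 1 − δ, and P_δ(t, h) = P_δ(t+1, h+ε) with ε = 1 if P(t+1, h+1) ≥ P(t+1, h) and ε = 0 otherwise. Then for all t ∈ {0,…,T} and all h ∈ {0,…,t}: if P(t,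 h) > 0 then P_δ(t, h) ≥ 1 − δ. In particular, if P(0,0) > 0 then the δ-enforced process reaches the target set with probability at least 1 − δ. -/
/-- pointwise soundness of the δ-enforcer: whenever the unenforced
success probability `P t h` is positive, the enforced success probability
`Pδ t h` is at least `1 - δ`; in particular, if `P 0 0 > 0` then the δ-enforced
process reaches the target set with probability at least `1 - δ`. -/
theorem delta_enforcer_sound (T : ℕ) (hT : 1 ≤ T) (p δ : ℝ)
    (hp : p ∈ Set.Icc (0:ℝ) 1) (hδ : δ ∈ Set.Icc (0:ℝ) 1)
    (S : Finset ℕ) (hS : ∀ s ∈ S, s ≤ T)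
    (P Pδ : ℕ → ℕ → ℝ)
    (hPT : ∀ h, P T h = if h ∈ S then 1 else 0)
    (hPrec : ∀ t, t < T → ∀ h, P t h = p * P (t+1) (h+1) + (1 - p) * P (t+1) h)
    (hPδT : ∀ h, Pδ T h = P T h)
    (hPδrec : ∀ t, t < T → ∀ h,
      Pδ t h = if 1 - δ ≤ P t h
        then p * Pδ (t+1) (h+1) + (1 - p) * Pδ (t+1) h
        else Pδ (t+1) (if P (t+1) h ≤ P (t+1) (h+1) then h + 1 else h)) :
    (∀ t ≤ T, ∀ h ≤ t, 0 < P t h → 1 - δ ≤ Pδ t h) ∧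
    (0 < P 0 0 → 1 - δ ≤ Pδ 0 0) := by
  obtain ⟨hp0, hp1⟩ := hp
  obtain ⟨hδ0, hδ1⟩ := hδ
  -- Pδ is nonnegative
  have hPδ0 : ∀ k t, t + k = T → ∀ h, 0 ≤ Pδ t h := by
    intro k
    induction k with
    | zero =>
      intro t ht h
      have : t = T := by omega
      subst this
      rw [hPδT, hPT]
      split <;> norm_num
    | succ k ih =>
      intro t ht h
      have hlt : t < T := by omega
      have h1 : (t + 1) + k = T := by omega
      rw [hPδrec t hlt h]
      split
      · have i1 := ih (t + 1) h1 (h + 1)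
        have i2 := ih (t + 1) h1 h
        nlinarith
      · exact ih (t + 1) h1 _
  -- key invariant
  have key : ∀ k t, t + k = T → ∀ h, 0 < P t h →
      1 - δ ≤ Pδ t h ∧ P t h ≤ Pδ t h := by
    intro k
    induction k with
    | zero =>
      intro t ht h hpos
      have : t = T := by omega
      subst this
      rw [hPδT]
      rw [hPT] at hpos ⊢
      split at hpos
      · rename_i hmem
        rw [if_pos hmem]
        constructor <;> linarith
      · linarith
    | succ k ih =>
      intro t ht h hpos
      have hlt : t < T := by omega
      have h1 : (t + 1) + k = T := by omega
      rw [hPδrec t hlt h]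
      rw [hPrec t hlt h] at hpos
      split
      · rename_i hge
        rw [hPrec t hlt h] at hge
        have hA : p * P (t+1) (h+1) ≤ p * Pδ (t+1) (h+1) := by
          rcases le_or_gt (P (t+1) (h+1)) 0 with hc | hc
          · have := hPδ0 k (t + 1) h1 (h + 1)
            nlinarith
          · have := (ih (t + 1) h1 (h + 1) hc).2
            nlinarith
        have hB : (1 - p) * P (t+1) h ≤ (1 - p) * Pδ (t+1) h := by
          rcases le_or_gt (P (t+1) h) 0 with hc | hc
          · have := hPδ0 k (t + 1) h1 h
            nlinarith
          · have := (ih (t + 1) h1 h hc).2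
            nlinarith
        constructor
        · linarith
        · rw [hPrec t hlt h]; linarith
      · rename_i hng
        rw [hPrec t hlt h] at hng
        push_neg at hng
        split
        · rename_i hBA
          have hApos : 0 < P (t+1) (h+1) := by nlinarith
          obtain ⟨i1, i2⟩ := ih (t + 1) h1 (h + 1) hApos
          constructor
          · exact i1
          · rw [hPrec t hlt h]; nlinarith
        · rename_i hBA
          push_neg at hBA
          have hBpos : 0 < P (t+1) h := by nlinarith
          obtain ⟨i1, i2⟩ := ih (t + 1) h1 h hBpos
          constructor
          · exact i1
          · rw [hPrec t hlt h]; nlinarith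
  constructor
  · intro t ht h _ hpos
    exact (key (T - t) t (by omega) h hpos).1
  · intro hpos
    exact (key T 0 (by omega) 0 hpos).1
end
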